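/- arXiv:2501.17364 — 2 statements merged into one kernel-verified Lean document; each statement's English description precedes it below -/
import Mathlib

section
/- Every strongly internal set is sharply open: if (A_ε) is a net of subsets of ℝ^n, then ⟨A_ε⟩ := { x ∈ ℝ̃_ρ^n : for all representatives (x_ε) of x, x_ε ∈ A_ε for ε small } is open in the sharp topology; moreover ⟨A_ε⟩ = ⟨int(A_ε)⟩. -/
/-!
If `x ∈ ⟨A_ε⟩` is moderate, some ball `B(x_ε, ρ_ε^N)` lies in `A_ε` for all small `ε`. Otherwise,
for every `k` there are arbitrarily small `ε` with a point of `A_εᶜ` within `ρ_ε^k` of `x_ε`;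
picking one such `ε_k` for each `k`, with `ε_k → 0`, and moving `x` to that point at `ε_k` gives a
representative of the same point that is frequently outside `A_ε`. The ball yields the sharp
neighbourhood of radius `ρ^(N+1)`, and, applied to every representative, `x_ε ∈ int(A_ε)`.
-/

open Filter Topology

namespace RC

def F : Filter ℝ := nhdsWithin 0 (Set.Ioi 0)

/-- A gauge: a net `ρ : (0,1] → (0,1]` with `ρ ε → 0` as `ε → 0⁺`. -/
def Gauge (ρ : ℝ → ℝ) : Prop :=
  (∀ ε ∈ Set.Ioc (0:ℝ) 1, ρ ε ∈ Set.Ioc (0:ℝ) 1) ∧ Tendsto ρ F (nhds 0)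

/-- ρ-moderate real nets: `x_ε = O(ρ_ε^{-N})` for some `N`. -/
def Mod (ρ x : ℝ → ℝ) : Prop :=
  ∃ N : ℕ, ∃ C : ℝ, ∀ᶠ ε in F, |x ε| ≤ C * (ρ ε)⁻¹ ^ N

/-- ρ-negligible real nets: `x_ε = O(ρ_ε^{N})` for all `N`. -/
def Ngl (ρ x : ℝ → ℝ) : Prop :=
  ∀ N : ℕ, ∃ C : ℝ, ∀ᶠ ε in F, |x ε| ≤ C * ρ ε ^ N

def Eqv (ρ x y : ℝ → ℝ) : Prop := Ngl ρ (x - y)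

/-- The order on generalized numbers, at the level of representatives. -/
def leG (ρ x y : ℝ → ℝ) : Prop :=
  ∀ x', Mod ρ x' → Eqv ρ x' x → ∃ y', Mod ρ y' ∧ Eqv ρ y' y ∧ ∀ᶠ ε in F, x' ε ≤ y' ε

/-- Invertibility in the quotient ring, at the level of representatives. -/
def InvG (ρ x : ℝ → ℝ) : Prop := ∃ y, Mod ρ y ∧ Eqv ρ (x * y) 1

def ltG (ρ x y : ℝ → ℝ) : Prop := leG ρ x y ∧ InvG ρ (y - x)

def posInv (ρ r : ℝ → ℝ) : Prop := ltG ρ 0 r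

def ModC (ρ : ℝ → ℝ) (x : ℝ → ℂ) : Prop :=
  ∃ N : ℕ, ∃ C : ℝ, ∀ᶠ ε in F, ‖x ε‖ ≤ C * (ρ ε)⁻¹ ^ N

def NglC (ρ : ℝ → ℝ) (x : ℝ → ℂ) : Prop :=
  ∀ N : ℕ, ∃ C : ℝ, ∀ᶠ ε in F, ‖x ε‖ ≤ C * ρ ε ^ N

def EqvC (ρ : ℝ → ℝ) (x y : ℝ → ℂ) : Prop := NglC ρ (x - y)

def InvC (ρ : ℝ → ℝ) (x : ℝ → ℂ) : Prop := ∃ y, ModC ρ y ∧ EqvC ρ (x * y) 1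

noncomputable def absC (x : ℝ → ℂ) : ℝ → ℝ := fun ε => ‖x ε‖

variable {n : ℕ}

def ModV (ρ : ℝ → ℝ) (x : ℝ → EuclideanSpace ℝ (Fin n)) : Prop :=
  ∃ N : ℕ, ∃ C : ℝ, ∀ᶠ ε in F, ‖x ε‖ ≤ C * (ρ ε)⁻¹ ^ N

def NglV (ρ : ℝ → ℝ) (x : ℝ → EuclideanSpace ℝ (Fin n)) : Prop :=
  ∀ N : ℕ, ∃ C : ℝ, ∀ᶠ ε in F, ‖x ε‖ ≤ C * ρ ε ^ N

def EqvV (ρ : ℝ → ℝ) (x y : ℝ → EuclideanSpace ℝ (Fin n)) : Prop := NglV ρ (x - y)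

/-- Membership in the internal set `[A_ε]`. -/
def memInt (ρ : ℝ → ℝ) (A : ℝ → Set (EuclideanSpace ℝ (Fin n)))
    (x : ℝ → EuclideanSpace ℝ (Fin n)) : Prop :=
  ∃ x', ModV ρ x' ∧ EqvV ρ x' x ∧ ∀ᶠ ε in F, x' ε ∈ A ε

/-- Membership in the strongly internal set `⟨A_ε⟩`. -/
def memStr (ρ : ℝ → ℝ) (A : ℝ → Set (EuclideanSpace ℝ (Fin n)))
    (x : ℝ → EuclideanSpace ℝ (Fin n)) : Prop :=
  ∀ x', ModV ρ x' → EqvV ρ x' x → ∀ᶠ ε in F, x' ε ∈ A ε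

end RC

theorem Filter.exists_seq_tendsto_forall_of_frequently {α : Type*} {l : Filter α}
    [l.IsCountablyGenerated] {P : ℕ → α → Prop} (h : ∀ k, ∃ᶠ a in l, P k a) :
    ∃ e : ℕ → α, Tendsto e atTop l ∧ ∀ k, P k (e k) := by
  obtain ⟨s, hs⟩ := l.exists_antitone_basis
  choose e he using fun k => ((h k).and_eventually (hs.mem k)).exists
  exact ⟨e, hs.tendsto fun k => (he k).2, fun k => (he k).1⟩

namespace RC

-- `Mod ρ x` is `IsModerate ρ (|x ·|)` and `NglV ρ x` is `IsNegligible ρ (‖x ·‖)` definitionally,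
-- so the real and the vector-valued cases share these lemmas.

def IsModerate (ρ f : ℝ → ℝ) : Prop :=
  ∃ N : ℕ, ∃ C : ℝ, ∀ᶠ ε in F, f ε ≤ C * (ρ ε)⁻¹ ^ N

def IsNegligible (ρ f : ℝ → ℝ) : Prop :=
  ∀ N : ℕ, ∃ C : ℝ, ∀ᶠ ε in F, f ε ≤ C * ρ ε ^ N

variable {n : ℕ} {ρ : ℝ → ℝ}

theorem Gauge.eventually_mem_Ioc (hρ : Gauge ρ) : ∀ᶠ ε in F, ρ ε ∈ Set.Ioc (0 : ℝ) 1 :=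
  Filter.mem_of_superset (Ioc_mem_nhdsGT one_pos) hρ.1

theorem Gauge.eventually_le_half (hρ : Gauge ρ) : ∀ᶠ ε in F, ρ ε ≤ 1 / 2 :=
  hρ.2.eventually (ge_mem_nhds one_half_pos)

theorem IsModerate.mono {f g : ℝ → ℝ} (hg : IsModerate ρ g) (hfg : ∀ ε, f ε ≤ g ε) :
    IsModerate ρ f :=
  let ⟨N, C, h⟩ := hg
  ⟨N, C, h.mono fun ε hε => (hfg ε).trans hε⟩

theorem IsModerate.add (hρ : Gauge ρ) {f g : ℝ → ℝ} (hf : IsModerate ρ f)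
    (hg : IsModerate ρ g) : IsModerate ρ (f + g) := by
  obtain ⟨N₁, C₁, h₁⟩ := hf
  obtain ⟨N₂, C₂, h₂⟩ := hg
  refine ⟨N₁ + N₂, |C₁| + |C₂|, ?_⟩
  filter_upwards [h₁, h₂, hρ.eventually_mem_Ioc] with ε h₁ h₂ hρε
  have hinv : 1 ≤ (ρ ε)⁻¹ := (one_le_inv₀ hρε.1).mpr hρε.2
  have hle₁ : (ρ ε)⁻¹ ^ N₁ ≤ (ρ ε)⁻¹ ^ (N₁ + N₂) := pow_le_pow_right₀ hinv (by omega)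
  have hle₂ : (ρ ε)⁻¹ ^ N₂ ≤ (ρ ε)⁻¹ ^ (N₁ + N₂) := pow_le_pow_right₀ hinv (by omega)
  have hpos₁ : 0 ≤ (ρ ε)⁻¹ ^ N₁ := by positivity
  have hpos₂ : 0 ≤ (ρ ε)⁻¹ ^ N₂ := by positivity
  calc f ε + g ε ≤ C₁ * (ρ ε)⁻¹ ^ N₁ + C₂ * (ρ ε)⁻¹ ^ N₂ := add_le_add h₁ h₂
    _ ≤ |C₁| * (ρ ε)⁻¹ ^ (N₁ + N₂) + |C₂| * (ρ ε)⁻¹ ^ (N₁ + N₂) :=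
        add_le_add (mul_le_mul (le_abs_self _) hle₁ hpos₁ (abs_nonneg _))
          (mul_le_mul (le_abs_self _) hle₂ hpos₂ (abs_nonneg _))
    _ = (|C₁| + |C₂|) * (ρ ε)⁻¹ ^ (N₁ + N₂) := by ring

theorem IsNegligible.mono {f g : ℝ → ℝ} (hg : IsNegligible ρ g) (hfg : ∀ ε, f ε ≤ g ε) :
    IsNegligible ρ f := fun N =>
  let ⟨C, h⟩ := hg N
  ⟨C, h.mono fun ε hε => (hfg ε).trans hε⟩

theorem IsNegligible.add {f g : ℝ → ℝ} (hf : IsNegligible ρ f) (hg : IsNegligible ρ g) :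
    IsNegligible ρ (f + g) := fun N => by
  obtain ⟨C₁, h₁⟩ := hf N
  obtain ⟨C₂, h₂⟩ := hg N
  refine ⟨C₁ + C₂, ?_⟩
  filter_upwards [h₁, h₂] with ε h₁ h₂
  rw [Pi.add_apply, add_mul]
  exact add_le_add h₁ h₂

theorem IsNegligible.isModerate {f : ℝ → ℝ} (hf : IsNegligible ρ f) : IsModerate ρ f :=
  let ⟨C, h⟩ := hf 0
  ⟨0, C, by simpa using h⟩

theorem IsNegligible.eventually_le_pow (hρ : Gauge ρ) {f : ℝ → ℝ} (hf : IsNegligible ρ f)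
    (M : ℕ) : ∀ᶠ ε in F, f ε ≤ ρ ε ^ M := by
  obtain ⟨C, hC⟩ := hf (M + 1)
  have hCρ : ∀ᶠ ε in F, C * ρ ε < 1 := by
    simpa using (hρ.2.const_mul C).eventually_lt_const (by simp)
  filter_upwards [hC, hCρ, hρ.eventually_mem_Ioc] with ε hC hCρ hρε
  calc f ε ≤ C * ρ ε ^ (M + 1) := hC
    _ = (C * ρ ε) * ρ ε ^ M := by ring
    _ ≤ 1 * ρ ε ^ M := by gcongr; exact pow_nonneg hρε.1.le M
    _ = ρ ε ^ M := one_mul _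

theorem ngl_of_eventuallyEq_zero {x : ℝ → ℝ} (hx : x =ᶠ[F] 0) : Ngl ρ x := fun _ =>
  ⟨0, hx.mono fun ε hε => by simp [hε]⟩

theorem eqv_refl (x : ℝ → ℝ) : Eqv ρ x x :=
  ngl_of_eventuallyEq_zero (by simp)

theorem mod_pow (hρ : Gauge ρ) (k : ℕ) : Mod ρ (fun ε => ρ ε ^ k) :=
  ⟨0, 1, hρ.eventually_mem_Ioc.mono fun ε hε => by
    simpa [abs_of_pos (pow_pos hε.1 k)] using pow_le_one₀ hε.1.le hε.2⟩

theorem Mod.add_ngl (hρ : Gauge ρ) {x d : ℝ → ℝ} (hx : Mod ρ x) (hd : Ngl ρ d) :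
    Mod ρ (x + d) :=
  IsModerate.mono (f := fun ε => |(x + d) ε|) (IsModerate.add hρ hx (IsNegligible.isModerate hd))
    fun ε => abs_add_le (x ε) (d ε)

theorem leG_of_eventually_le (hρ : Gauge ρ) {x y : ℝ → ℝ} (hy : Mod ρ y) (hxy : x ≤ᶠ[F] y) :
    leG ρ x y := by
  intro x' _ hx'x
  refine ⟨y + (x' - x), hy.add_ngl hρ hx'x, by rwa [Eqv, add_sub_cancel_left], ?_⟩
  filter_upwards [hxy] with ε hε
  simp only [Pi.add_apply, Pi.sub_apply]
  linarith

theorem posInv_pow (hρ : Gauge ρ) (k : ℕ) : posInv ρ (fun ε => ρ ε ^ k) := by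
  refine ⟨leG_of_eventually_le hρ (mod_pow hρ k)
    (hρ.eventually_mem_Ioc.mono fun ε hε => pow_nonneg hε.1.le k), ?_⟩
  refine ⟨fun ε => (ρ ε)⁻¹ ^ k, ⟨k, 1, ?_⟩, ngl_of_eventuallyEq_zero ?_⟩
  · filter_upwards [hρ.eventually_mem_Ioc] with _ hε
    rw [abs_of_nonneg (pow_nonneg (inv_nonneg.mpr hε.1.le) k), one_mul]
  · filter_upwards [hρ.eventually_mem_Ioc] with ε hε
    simp [mul_inv_cancel₀ (pow_pos hε.1 k).ne']

theorem mod_norm_sub (hρ : Gauge ρ) {x y : ℝ → EuclideanSpace ℝ (Fin n)} (hx : ModV ρ x)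
    (hy : ModV ρ y) : Mod ρ (fun ε => ‖x ε - y ε‖) :=
  IsModerate.mono (f := fun ε => |‖x ε - y ε‖|) (IsModerate.add hρ hx hy)
    fun _ => (abs_norm _).trans_le (norm_sub_le _ _)

theorem ModV.add_nglV (hρ : Gauge ρ) {x d : ℝ → EuclideanSpace ℝ (Fin n)} (hx : ModV ρ x)
    (hd : NglV ρ d) : ModV ρ (x + d) :=
  IsModerate.mono (f := fun ε => ‖(x + d) ε‖) (IsModerate.add hρ hx (IsNegligible.isModerate hd))
    fun ε => norm_add_le (x ε) (d ε)

theorem EqvV.trans {x y z : ℝ → EuclideanSpace ℝ (Fin n)} (hxy : EqvV ρ x y)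
    (hyz : EqvV ρ y z) : EqvV ρ x z :=
  IsNegligible.mono (f := fun ε => ‖(x - z) ε‖) (IsNegligible.add hxy hyz)
    fun ε => norm_sub_le_norm_sub_add_norm_sub (x ε) (y ε) (z ε)

theorem memStr.of_eqvV {A : ℝ → Set (EuclideanSpace ℝ (Fin n))}
    {x y : ℝ → EuclideanSpace ℝ (Fin n)} (hx : memStr ρ A x) (hyx : EqvV ρ y x) :
    memStr ρ A y :=
  fun y' hy' hy'y => hx y' hy' (hy'y.trans hyx)

theorem memStr.mono {A B : ℝ → Set (EuclideanSpace ℝ (Fin n))} (hAB : ∀ ε, A ε ⊆ B ε)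
    {x : ℝ → EuclideanSpace ℝ (Fin n)} (hx : memStr ρ A x) : memStr ρ B x :=
  fun x' hx' hx'x => (hx x' hx' hx'x).mono fun ε hε => hAB ε hε

theorem exists_nglV_sub_frequently_notMem (hρ : Gauge ρ)
    {A : ℝ → Set (EuclideanSpace ℝ (Fin n))} {x : ℝ → EuclideanSpace ℝ (Fin n)}
    (hbad : ∀ k : ℕ, ∃ᶠ ε in F, ∃ z ∈ Metric.closedBall (x ε) (ρ ε ^ k), z ∉ A ε) :
    ∃ x', NglV ρ (x' - x) ∧ ∃ᶠ ε in F, x' ε ∉ A ε := by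
  obtain ⟨e, he, hbad_e⟩ := Filter.exists_seq_tendsto_forall_of_frequently
    (l := 𝓝[>] (0 : ℝ)) fun k => (hbad k).and_eventually self_mem_nhdsWithin
  choose z hz hzA using fun k => (hbad_e k).1
  classical
  let x' : ℝ → EuclideanSpace ℝ (Fin n) := fun ε =>
    if h : ∃ k, e k = ε then z h.choose else x ε
  refine ⟨x', fun M => ⟨1, ?_⟩, he.frequently (Frequently.of_forall fun k => ?_)⟩
  · -- near `0` the net `e` only takes values `e k` with `k ≥ M`
    have hfar : ∀ᶠ ε in F, ∀ k ∈ Finset.range M, e k ≠ ε := by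
      refine (Finset.eventually_all _).2 fun k _ => ?_
      exact (eventually_ne_nhds (hbad_e k).2.ne).filter_mono nhdsWithin_le_nhds |>.mono
        fun ε hε => hε.symm
    filter_upwards [hfar, hρ.eventually_mem_Ioc] with ε hfar hρε
    rw [one_mul, Pi.sub_apply]
    by_cases h : ∃ k, e k = ε
    · have hM : M ≤ h.choose := by
        by_contra! hlt
        exact hfar _ (Finset.mem_range.2 hlt) h.choose_spec
      have hzε := hz h.choose
      rw [h.choose_spec, Metric.mem_closedBall, dist_eq_norm] at hzε
      simp only [x', dif_pos h]
      exact hzε.trans (pow_le_pow_of_le_one hρε.1.le hρε.2 hM)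
    · simp only [x', dif_neg h, sub_self, norm_zero]
      exact pow_nonneg hρε.1.le M
  · have h : ∃ j, e j = e k := ⟨k, rfl⟩
    have hzA_k := hzA h.choose
    rw [h.choose_spec] at hzA_k
    simpa only [x', dif_pos h] using hzA_k

theorem memStr.exists_closedBall_subset (hρ : Gauge ρ)
    {A : ℝ → Set (EuclideanSpace ℝ (Fin n))} {x : ℝ → EuclideanSpace ℝ (Fin n)}
    (hx : ModV ρ x) (hxA : memStr ρ A x) :
    ∃ N : ℕ, ∀ᶠ ε in F, Metric.closedBall (x ε) (ρ ε ^ N) ⊆ A ε := by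
  by_contra! hbad
  obtain ⟨x', hx'x, hx'A⟩ := exists_nglV_sub_frequently_notMem hρ fun k =>
    (hbad k).mono fun ε hε => Set.not_subset.1 hε
  have hx' : ModV ρ x' := by simpa using hx.add_nglV hρ hx'x
  obtain ⟨ε, hεA, hεA'⟩ := (hx'A.and_eventually (hxA x' hx' hx'x)).exists
  exact hεA hεA'

theorem memStr_of_leG_norm_sub (hρ : Gauge ρ) {A : ℝ → Set (EuclideanSpace ℝ (Fin n))}
    {x y : ℝ → EuclideanSpace ℝ (Fin n)} {N : ℕ}
    (hxA : ∀ᶠ ε in F, Metric.closedBall (x ε) (ρ ε ^ N) ⊆ A ε)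
    (hx : ModV ρ x) (hy : ModV ρ y)
    (hxy : leG ρ (fun ε => ‖x ε - y ε‖) (fun ε => ρ ε ^ (N + 1))) : memStr ρ A y := by
  intro y' _ hy'y
  obtain ⟨r, -, hr, hxyr⟩ := hxy _ (mod_norm_sub hρ hx hy) (eqv_refl _)
  have hsmall := (IsNegligible.add hy'y hr).eventually_le_pow hρ (N + 1)
  filter_upwards [hxA, hxyr, hsmall, hρ.eventually_mem_Ioc, hρ.eventually_le_half]
    with ε hxA hxyr hsmall hρε hρε_half
  refine hxA (mem_closedBall_iff_norm.2 ?_)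
  simp only [Pi.add_apply, Pi.sub_apply] at hsmall
  have hpow : 2 * ρ ε ^ (N + 1) ≤ ρ ε ^ N := by
    rw [pow_succ]
    nlinarith [pow_nonneg hρε.1.le N]
  calc ‖y' ε - x ε‖ ≤ ‖y' ε - y ε‖ + ‖y ε - x ε‖ := norm_sub_le_norm_sub_add_norm_sub ..
    _ ≤ ‖y' ε - y ε‖ + |r ε - ρ ε ^ (N + 1)| + ρ ε ^ (N + 1) := by
        rw [norm_sub_rev (y ε)]
        linarith [le_abs_self (r ε - ρ ε ^ (N + 1))]
    _ ≤ ρ ε ^ N := by linarith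

theorem memStr_interior (hρ : Gauge ρ) {A : ℝ → Set (EuclideanSpace ℝ (Fin n))}
    {x : ℝ → EuclideanSpace ℝ (Fin n)} (hxA : memStr ρ A x) :
    memStr ρ (fun ε => interior (A ε)) x := by
  intro x' hx' hx'x
  obtain ⟨N, hN⟩ := (hxA.of_eqvV hx'x).exists_closedBall_subset hρ hx'
  filter_upwards [hN, hρ.eventually_mem_Ioc] with ε hN hρε
  exact mem_interior_iff_mem_nhds.2 <|
    Filter.mem_of_superset (Metric.closedBall_mem_nhds _ (pow_pos hρε.1 N)) hN

/-- Strongly internal sets are sharply open, and `⟨A_ε⟩ = ⟨int(A_ε)⟩`. -/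
theorem stronglyInternal_sharply_open (ρ : ℝ → ℝ) (hρ : Gauge ρ) (n : ℕ)
    (A : ℝ → Set (EuclideanSpace ℝ (Fin n))) :
    (∀ x, ModV ρ x → memStr ρ A x →
      ∃ r : ℝ → ℝ, Mod ρ r ∧ posInv ρ r ∧
        ∀ y, ModV ρ y → ltG ρ (fun ε => ‖x ε - y ε‖) r → memStr ρ A y) ∧
    (∀ x, ModV ρ x → (memStr ρ A x ↔ memStr ρ (fun ε => interior (A ε)) x)) := by
  refine ⟨fun x hx hxA => ?_, fun x _ => ⟨memStr_interior hρ, memStr.mono fun _ => interior_subset⟩⟩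
  obtain ⟨N, hN⟩ := hxA.exists_closedBall_subset hρ hx
  exact ⟨fun ε => ρ ε ^ (N + 1), mod_pow hρ _, posInv_pow hρ _,
    fun y hy hxy => memStr_of_leG_norm_sub hρ hN hx hy hxy.1⟩

end RC
end

section
/- If the closed ball satisfies cl B_r(c) ⊆ ⟨A_ε⟩ for a net (A_ε) of subsets of ℂ, with c = [c_ε] and r = [r_ε] > 0, then E_{r_ε}(c_ε) ⊆ A_ε for all ε sufficiently small. -/
open Filter Topology

namespace RC

/-- Membership in the internal set `[A_ε]` of complex subsets. -/
def memIntC (ρ : ℝ → ℝ) (A : ℝ → Set ℂ) (x : ℝ → ℂ) : Prop :=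
  ∃ x', ModC ρ x' ∧ EqvC ρ x' x ∧ ∀ᶠ ε in F, x' ε ∈ A ε

/-- Membership in the strongly internal set `⟨A_ε⟩` of complex subsets. -/
def memStrC (ρ : ℝ → ℝ) (A : ℝ → Set ℂ) (x : ℝ → ℂ) : Prop :=
  ∀ x', ModC ρ x' → EqvC ρ x' x → ∀ᶠ ε in F, x' ε ∈ A ε

/-!
For each `ε` pick `z_ε ∈ E_{r_ε}(c_ε) \ A_ε` if this set is nonempty, and `z_ε = c_ε` otherwise.
Then `‖z_ε - c_ε‖ ≤ r_ε⁺ = r_ε + r_ε⁻`, and `r_ε⁻` is negligible because `r ≥ 0`, so `z = [z_ε]` is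
a moderate point of the closed sharp ball and hence lies in `⟨A_ε⟩`. Testing this membership on the
representative `(z_ε)` itself gives `z_ε ∈ A_ε` for small `ε`, which by the choice of `z_ε` forces
`E_{r_ε}(c_ε) ⊆ A_ε`.
-/

variable {ρ : ℝ → ℝ}

lemma Gauge.eventually_pos_le_one (hρ : Gauge ρ) : ∀ᶠ ε in F, 0 < ρ ε ∧ ρ ε ≤ 1 := by
  filter_upwards [Ioc_mem_nhdsGT (zero_lt_one' ℝ)] with ε hε
  exact hρ.1 ε hε

lemma le_abs_mul_of_le_mul {x C a b : ℝ} (hx : x ≤ C * a) (ha : 0 ≤ a) (hab : a ≤ b) :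
    x ≤ |C| * b :=
  hx.trans <| (mul_le_mul_of_nonneg_right (le_abs_self C) ha).trans <|
    mul_le_mul_of_nonneg_left hab (abs_nonneg C)

lemma Mod.of_abs_le {x y : ℝ → ℝ} (hy : Mod ρ y) (h : ∀ᶠ ε in F, |x ε| ≤ |y ε|) : Mod ρ x := by
  obtain ⟨N, C, hy⟩ := hy
  exact ⟨N, C, by filter_upwards [h, hy] with ε hxy hy using hxy.trans hy⟩

lemma Mod.add (hρ : Gauge ρ) {x y : ℝ → ℝ} (hx : Mod ρ x) (hy : Mod ρ y) : Mod ρ (x + y) := by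
  obtain ⟨N, C, hx⟩ := hx
  obtain ⟨M, D, hy⟩ := hy
  refine ⟨N + M, |C| + |D|, ?_⟩
  filter_upwards [hρ.eventually_pos_le_one, hx, hy] with ε ⟨hpos, hle⟩ hx hy
  have hmono {k : ℕ} (hk : k ≤ N + M) : (ρ ε)⁻¹ ^ k ≤ (ρ ε)⁻¹ ^ (N + M) :=
    pow_le_pow_right₀ ((one_le_inv₀ hpos).2 hle) hk
  calc |(x + y) ε| ≤ |x ε| + |y ε| := abs_add_le _ _
    _ ≤ |C| * (ρ ε)⁻¹ ^ (N + M) + |D| * (ρ ε)⁻¹ ^ (N + M) :=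
      add_le_add (le_abs_mul_of_le_mul hx (by positivity) (hmono (Nat.le_add_right N M)))
        (le_abs_mul_of_le_mul hy (by positivity) (hmono (Nat.le_add_left M N)))
    _ = (|C| + |D|) * (ρ ε)⁻¹ ^ (N + M) := by ring

lemma Ngl.zero : Ngl ρ 0 := fun _ => ⟨0, by simp⟩

lemma Ngl.of_abs_le {x y : ℝ → ℝ} (hy : Ngl ρ y) (h : ∀ᶠ ε in F, |x ε| ≤ |y ε|) : Ngl ρ x :=
  fun N => let ⟨C, hy⟩ := hy N; ⟨C, by filter_upwards [h, hy] with ε hxy hy using hxy.trans hy⟩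

lemma Ngl.add {x y : ℝ → ℝ} (hx : Ngl ρ x) (hy : Ngl ρ y) : Ngl ρ (x + y) := by
  intro N
  obtain ⟨C, hx⟩ := hx N
  obtain ⟨D, hy⟩ := hy N
  refine ⟨C + D, ?_⟩
  filter_upwards [hx, hy] with ε hx hy
  calc |(x + y) ε| ≤ |x ε| + |y ε| := abs_add_le _ _
    _ ≤ (C + D) * ρ ε ^ N := by linarith

lemma Ngl.mod {x : ℝ → ℝ} (hx : Ngl ρ x) : Mod ρ x :=
  let ⟨C, hx⟩ := hx 0
  ⟨0, C, by simpa using hx⟩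

lemma modC_iff_mod_absC {x : ℝ → ℂ} : ModC ρ x ↔ Mod ρ (absC x) := by
  simp only [ModC, Mod, absC, abs_norm]

lemma EqvC.refl (x : ℝ → ℂ) : EqvC ρ x x := fun _ => ⟨0, by simp⟩

lemma leG_of_eventually_le_add (hρ : Gauge ρ) {x y d : ℝ → ℝ} (hy : Mod ρ y) (hd : Ngl ρ d)
    (h : ∀ᶠ ε in F, x ε ≤ y ε + d ε) : leG ρ x y := by
  intro x' _ hx'
  have herr : Ngl ρ (d + (x' - x)) := hd.add hx'
  refine ⟨y + (d + (x' - x)), hy.add hρ herr.mod, by simpa [Eqv] using herr, ?_⟩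
  filter_upwards [h] with ε hε
  simp only [Pi.add_apply, Pi.sub_apply]
  linarith

lemma ngl_negPart_of_leG_zero {r : ℝ → ℝ} (hr : leG ρ 0 r) : Ngl ρ r⁻ := by
  obtain ⟨y, -, hyr, hy⟩ := hr 0 Ngl.zero.mod (by simpa [Eqv] using Ngl.zero)
  refine hyr.of_abs_le ?_
  filter_upwards [hy] with ε hy
  simp only [Pi.negPart_apply, negPart_def, Pi.sub_apply, Pi.zero_apply] at hy ⊢
  rw [abs_of_nonneg (le_max_right _ _)]
  exact max_le (le_abs.2 (Or.inl (by linarith))) (abs_nonneg _)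

lemma exists_dist_le_posPart_and_notMem {X : Type*} [PseudoMetricSpace X] (c : X) (R : ℝ)
    (A : Set X) : ∃ w, dist w c ≤ R⁺ ∧ (¬ Metric.ball c R ⊆ A → w ∉ A) := by
  by_cases hball : Metric.ball c R ⊆ A
  · exact ⟨c, by simp [posPart_nonneg], fun h => (h hball).elim⟩
  · obtain ⟨w, hw, hwA⟩ := Set.not_subset.1 hball
    exact ⟨w, (Metric.mem_ball.1 hw).le.trans (le_posPart R), fun _ => hwA⟩

/-- If the closed sharp ball is contained in the strongly internal set `⟨A_ε⟩`, then
`E_{r_ε}(c_ε) ⊆ A_ε` for ε small. -/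
theorem closedBall_subset_stronglyInternal (ρ : ℝ → ℝ) (hρ : Gauge ρ)
    (c : ℝ → ℂ) (hc : ModC ρ c) (r : ℝ → ℝ) (hr : Mod ρ r) (hrpos : posInv ρ r)
    (A : ℝ → Set ℂ)
    (h : ∀ z, ModC ρ z → leG ρ (absC (z - c)) r → memStrC ρ A z) :
    ∀ᶠ ε in F, Metric.ball (c ε) (r ε) ⊆ A ε := by
  choose z hzc hzA using fun ε => exists_dist_le_posPart_and_notMem (c ε) (r ε) (A ε)
  have hdist (ε : ℝ) : absC (z - c) ε ≤ r ε + r⁻ ε := by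
    simp only [absC, Pi.sub_apply, Pi.negPart_apply, ← dist_eq_norm]
    linarith [hzc ε, posPart_sub_negPart (r ε)]
  have hz : ModC ρ z := by
    have habs_r : Mod ρ fun ε => |r ε| := hr.of_abs_le (by simp)
    refine modC_iff_mod_absC.2 <| ((modC_iff_mod_absC.1 hc).add hρ habs_r).of_abs_le ?_
    refine Eventually.of_forall fun ε => ?_
    have hnorm : ‖z ε‖ ≤ ‖c ε‖ + (r ε)⁺ := norm_le_norm_add_const_of_dist_le (hzc ε)
    simp only [absC, Pi.add_apply, abs_norm]
    rw [abs_of_nonneg (by positivity)]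
    linarith [posPart_add_negPart (r ε), negPart_nonneg (r ε)]
  have hle : leG ρ (absC (z - c)) r :=
    leG_of_eventually_le_add hρ hr (ngl_negPart_of_leG_zero hrpos.1) (Eventually.of_forall hdist)
  filter_upwards [h z hz hle z hz (EqvC.refl z)] with ε hzA'
  by_contra hball
  exact hzA ε hball hzA'

end RC
end
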